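/- Let G = (V,E) be a finite graph, (Λ,Σ,μ) a probability space, and (Γ_a)_{a ∈ V} measurable subsets of Λ with Γ_a ∩ Γ_b = ∅ whenever (a,b) ∈ E. Then ∑_{a ∈ V} μ(Γ_a) ≤ α(G), the independence number of G. -/

import Mathlib

open MeasureTheory

/-- The independence number of a graph: the clique number of its complement. -/
noncomputable def indepNum {V : Type*} (G : SimpleGraph V) : ℕ := Gᶜ.cliqueNum

/-! At each point `x`, the vertices `a` with `x ∈ Γ a` form an independent set of `G`, so
`∑ a, 𝟙_{Γ a} ≤ α(G)` pointwise; integrating against the probability measure `μ` gives the bound. -/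

open Finset

open Classical in
theorem MeasureTheory.sum_measure_le_mul_measure_univ {ι α : Type*} [MeasurableSpace α]
    (μ : Measure α) (t : Finset ι) {s : ι → Set α} (hs : ∀ i ∈ t, MeasurableSet (s i)) {k : ℕ}
    (hk : ∀ x, #{i ∈ t | x ∈ s i} ≤ k) :
    ∑ i ∈ t, μ (s i) ≤ k * μ Set.univ := by
  have hmult (x : α) : ∑ i ∈ t, (s i).indicator 1 x = (#{i ∈ t | x ∈ s i} : ENNReal) := by
    simp only [Set.indicator_apply, Pi.one_apply, card_filter, Nat.cast_sum, Nat.cast_ite,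
      Nat.cast_one, Nat.cast_zero]
  calc ∑ i ∈ t, μ (s i)
      = ∫⁻ x, ∑ i ∈ t, (s i).indicator 1 x ∂μ := by
        rw [lintegral_finsetSum _ fun i hi => measurable_one.indicator (hs i hi)]
        exact sum_congr rfl fun i hi => (lintegral_indicator_one (hs i hi)).symm
    _ ≤ ∫⁻ _, (k : ENNReal) ∂μ :=
        lintegral_mono fun x => by rw [hmult]; exact Nat.cast_le.mpr (hk x)
    _ = k * μ Set.univ := lintegral_const _

open Classical in
theorem SimpleGraph.isIndepSet_filter_mem_of_adj_disjoint {V Λ : Type*} (G : SimpleGraph V)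
    (t : Finset V) {Γ : V → Set Λ} (hdisj : ∀ a b, G.Adj a b → Disjoint (Γ a) (Γ b)) (x : Λ) :
    G.IsIndepSet (({a ∈ t | x ∈ Γ a} : Finset V) : Set V) := by
  intro a ha b hb _ hadj
  simp only [coe_filter, Set.mem_ofPred_eq] at ha hb
  exact Set.disjoint_left.mp (hdisj a b hadj) ha.2 hb.2

theorem sum_measure_le_indepNum {V : Type*} [Fintype V] (G : SimpleGraph V)
    {Λ : Type*} [MeasurableSpace Λ] (μ : Measure Λ) [IsProbabilityMeasure μ]
    (Γ : V → Set Λ) (hΓ : ∀ a, MeasurableSet (Γ a))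
    (hdisj : ∀ a b, G.Adj a b → Disjoint (Γ a) (Γ b)) :
    ∑ a : V, μ (Γ a) ≤ (indepNum G : ENNReal) := by
  classical
  have hmult (x : Λ) : #{a ∈ univ | x ∈ Γ a} ≤ indepNum G := by
    rw [indepNum, SimpleGraph.cliqueNum_compl]
    exact (G.isIndepSet_filter_mem_of_adj_disjoint univ hdisj x).card_le_indepNum
  simpa only [measure_univ, mul_one] using
    sum_measure_le_mul_measure_univ μ univ (fun a _ => hΓ a) hmult
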